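/- arXiv:2601.05610 — 2 statements merged into one kernel-verified Lean document; each statement's English description precedes it below -/
import Mathlib

section
/- Let T be a linear operator that is bounded from E₀ to F₀ with norm M₀ and from E₁ to F₁ with norm M₁, where (E₀,E₁) and (F₀,F₁) are compatible couples of Banach spaces. Then for each 0 < θ < 1, T is bounded from the complex interpolation space [E₀,E₁]_θ to [F₀,F₁]_θ with norm at most M₀^{1-θ} M₁^θ. -/
/-!
If `f` is an admissible family for `x`, then `z ↦ M₀ ^ (z - θ) M₁ ^ (θ - z) • T (f z)` is an
admissible family for `T x`. The scalar factor is entire, bounded on the strip and equal to `1`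
at `θ`; its modulus is `M₀ ^ (-θ) M₁ ^ θ` on `Re z = 0` and `M₀ ^ (1 - θ) M₁ ^ (θ - 1)` on
`Re z = 1`, which turns the boundary bounds `M₀ r` and `M₁ r` into the same bound
`M₀ ^ (1 - θ) M₁ ^ θ r`.
-/

open Complex

/-- The closed unit strip 0 ≤ Re z ≤ 1. -/
def interpStrip : Set ℂ := {z : ℂ | 0 ≤ z.re ∧ z.re ≤ 1}

/-- The open unit strip 0 < Re z < 1. -/
def interpStripInt : Set ℂ := {z : ℂ | 0 < z.re ∧ z.re < 1}

/-- For a compatible Banach couple (E₀, E₁) given by continuous linear inclusions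
    j₀ : E₀ → V, j₁ : E₁ → V into an ambient space V, `interpBound j₀ j₁ θ x r` says that
    x belongs to the complex interpolation space [E₀,E₁]_θ with norm ≤ r: there is a
    bounded analytic family f on the strip with f(θ) = x, whose boundary values on
    Re z = 0 (resp. Re z = 1) lie in E₀ (resp. E₁) with norms ≤ r. -/
def interpBound {V E₀ E₁ : Type*} [NormedAddCommGroup V] [NormedSpace ℂ V]
    [NormedAddCommGroup E₀] [NormedSpace ℂ E₀] [NormedAddCommGroup E₁] [NormedSpace ℂ E₁]
    (j₀ : E₀ →L[ℂ] V) (j₁ : E₁ →L[ℂ] V) (θ : ℝ) (x : V) (r : ℝ) : Prop :=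
  ∃ f : ℂ → V,
    (∀ z ∈ interpStripInt, DifferentiableAt ℂ f z) ∧
    ContinuousOn f interpStrip ∧
    (∃ C : ℝ, ∀ z ∈ interpStrip, ‖f z‖ ≤ C) ∧
    f (θ : ℂ) = x ∧
    (∀ t : ℝ, ∃ a : E₀, j₀ a = f (Complex.I * t) ∧ ‖a‖ ≤ r) ∧
    (∀ t : ℝ, ∃ b : E₁, j₁ b = f (1 + Complex.I * t) ∧ ‖b‖ ≤ r)

noncomputable def interpMultiplier (M₀ M₁ θ : ℝ) (z : ℂ) : ℂ :=
  (M₀ : ℂ) ^ (z - θ) * (M₁ : ℂ) ^ ((θ : ℂ) - z)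

section interpMultiplier

variable {M₀ M₁ θ : ℝ}

theorem differentiable_interpMultiplier (hM₀ : M₀ ≠ 0) (hM₁ : M₁ ≠ 0) :
    Differentiable ℂ (interpMultiplier M₀ M₁ θ) :=
  ((differentiable_id.sub_const _).const_cpow (.inl (ofReal_ne_zero.2 hM₀))).mul
    (((differentiable_const _).sub differentiable_id).const_cpow (.inl (ofReal_ne_zero.2 hM₁)))

theorem interpMultiplier_self : interpMultiplier M₀ M₁ θ θ = 1 := by
  simp [interpMultiplier]

theorem norm_interpMultiplier (hM₀ : 0 < M₀) (hM₁ : 0 < M₁) (z : ℂ) :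
    ‖interpMultiplier M₀ M₁ θ z‖ = M₀ ^ (z.re - θ) * M₁ ^ (θ - z.re) := by
  simp only [interpMultiplier, norm_mul, norm_cpow_eq_rpow_re_of_pos hM₀,
    norm_cpow_eq_rpow_re_of_pos hM₁, sub_re, ofReal_re]

theorem exists_bound_interpMultiplier (hM₀ : 0 < M₀) (hM₁ : 0 < M₁) :
    ∃ C, ∀ z ∈ interpStrip, ‖interpMultiplier M₀ M₁ θ z‖ ≤ C := by
  have hcont : Continuous fun s : ℝ => M₀ ^ (s - θ) * M₁ ^ (θ - s) := by
    have := hM₀.ne'; have := hM₁.ne'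
    fun_prop (disch := assumption)
  obtain ⟨C, hC⟩ := (isCompact_Icc (a := (0 : ℝ)) (b := 1)).exists_bound_of_continuousOn
    hcont.continuousOn
  refine ⟨C, fun z hz => ?_⟩
  rw [norm_interpMultiplier hM₀ hM₁]
  exact (le_abs_self _).trans (hC z.re hz)

theorem norm_interpMultiplier_mul_of_re_eq_zero (hM₀ : 0 < M₀) (hM₁ : 0 < M₁) {z : ℂ}
    (hz : z.re = 0) : ‖interpMultiplier M₀ M₁ θ z‖ * M₀ = M₀ ^ (1 - θ) * M₁ ^ θ := by
  rw [norm_interpMultiplier hM₀ hM₁, hz, sub_zero, zero_sub, sub_eq_neg_add,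
    Real.rpow_add hM₀, Real.rpow_one]
  ring

theorem norm_interpMultiplier_mul_of_re_eq_one (hM₀ : 0 < M₀) (hM₁ : 0 < M₁) {z : ℂ}
    (hz : z.re = 1) : ‖interpMultiplier M₀ M₁ θ z‖ * M₁ = M₀ ^ (1 - θ) * M₁ ^ θ := by
  rw [norm_interpMultiplier hM₀ hM₁, hz, mul_assoc, ← Real.rpow_add_one hM₁.ne', sub_add_cancel]

end interpMultiplier

section families

variable {V W E F : Type*} [NormedAddCommGroup V] [NormedSpace ℂ V]
  [NormedAddCommGroup W] [NormedSpace ℂ W]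

theorem exists_bound_smul_map {S : Set ℂ} {c : ℂ → ℂ} {f : ℂ → V} (T : V →L[ℂ] W)
    (hc : ∃ C, ∀ z ∈ S, ‖c z‖ ≤ C) (hf : ∃ C, ∀ z ∈ S, ‖f z‖ ≤ C) :
    ∃ C, ∀ z ∈ S, ‖c z • T (f z)‖ ≤ C := by
  obtain ⟨C₁, hC₁⟩ := hc
  obtain ⟨C₂, hC₂⟩ := hf
  refine ⟨C₁ * (‖T‖ * C₂), fun z hz => ?_⟩
  rw [norm_smul]
  exact mul_le_mul (hC₁ z hz) (T.le_opNorm_of_le (hC₂ z hz)) (norm_nonneg _)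
    ((norm_nonneg _).trans (hC₁ z hz))

variable [NormedAddCommGroup E] [NormedSpace ℂ E] [NormedAddCommGroup F] [NormedSpace ℂ F]

theorem exists_smul_map_of_mem_image {j : E →L[ℂ] V} {k : F →L[ℂ] W} {T : V →L[ℂ] W} {M : ℝ}
    (hM : 0 ≤ M) (hT : ∀ a : E, ∃ a' : F, k a' = T (j a) ∧ ‖a'‖ ≤ M * ‖a‖)
    (c : ℂ) {v : V} {r : ℝ} (hv : ∃ a : E, j a = v ∧ ‖a‖ ≤ r) :
    ∃ a' : F, k a' = c • T v ∧ ‖a'‖ ≤ ‖c‖ * M * r := by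
  obtain ⟨a, rfl, har⟩ := hv
  obtain ⟨a', ha', ha'r⟩ := hT a
  refine ⟨c • a', by rw [map_smul, ha'], ?_⟩
  rw [norm_smul, mul_assoc]
  exact mul_le_mul_of_nonneg_left (ha'r.trans (mul_le_mul_of_nonneg_left har hM))
    (norm_nonneg c)

end families

theorem stmt_14_general {V W E₀ E₁ F₀ F₁ : Type*}
    [NormedAddCommGroup V] [NormedSpace ℂ V] [NormedAddCommGroup W] [NormedSpace ℂ W]
    [NormedAddCommGroup E₀] [NormedSpace ℂ E₀] [NormedAddCommGroup E₁] [NormedSpace ℂ E₁]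
    [NormedAddCommGroup F₀] [NormedSpace ℂ F₀] [NormedAddCommGroup F₁] [NormedSpace ℂ F₁]
    (j₀ : E₀ →L[ℂ] V) (j₁ : E₁ →L[ℂ] V) (k₀ : F₀ →L[ℂ] W) (k₁ : F₁ →L[ℂ] W)
    (T : V →L[ℂ] W) (M₀ M₁ : ℝ) (hM₀ : 0 < M₀) (hM₁ : 0 < M₁)
    (hT₀ : ∀ a : E₀, ∃ a' : F₀, k₀ a' = T (j₀ a) ∧ ‖a'‖ ≤ M₀ * ‖a‖)
    (hT₁ : ∀ b : E₁, ∃ b' : F₁, k₁ b' = T (j₁ b) ∧ ‖b'‖ ≤ M₁ * ‖b‖)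
    (θ : ℝ)
    (x : V) (r : ℝ) (hx : interpBound j₀ j₁ θ x r) :
    interpBound k₀ k₁ θ (T x) (M₀ ^ (1 - θ) * M₁ ^ θ * r) := by
  obtain ⟨f, hdiff, hcont, hbdd, hfθ, hb₀, hb₁⟩ := hx
  set c := interpMultiplier M₀ M₁ θ
  have hc : Differentiable ℂ c := differentiable_interpMultiplier hM₀.ne' hM₁.ne'
  refine ⟨fun z => c z • T (f z),
    fun z hz => (hc z).smul (T.differentiableAt.comp z (hdiff z hz)),
    hc.continuous.continuousOn.smul (T.continuous.comp_continuousOn hcont),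
    exists_bound_smul_map T (exists_bound_interpMultiplier hM₀ hM₁) hbdd,
    by simp only [c, interpMultiplier_self, hfθ, one_smul], fun t => ?_, fun t => ?_⟩
  · rw [← norm_interpMultiplier_mul_of_re_eq_zero hM₀ hM₁ (z := I * t) (by simp)]
    exact exists_smul_map_of_mem_image hM₀.le hT₀ _ (hb₀ t)
  · rw [← norm_interpMultiplier_mul_of_re_eq_one hM₀ hM₁ (z := 1 + I * t) (by simp)]
    exact exists_smul_map_of_mem_image hM₁.le hT₁ _ (hb₁ t)

/-- Interpolation of operators: if T maps E₀ → F₀ with norm ≤ M₀ and E₁ → F₁ with norm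
    ≤ M₁ (the couples being compatible via ambient spaces V, W), then for 0 < θ < 1,
    T maps [E₀,E₁]_θ → [F₀,F₁]_θ with norm ≤ M₀^{1-θ} M₁^θ: if x has interpolation
    norm ≤ r, then T x has interpolation norm ≤ M₀^{1-θ} M₁^θ r. -/
theorem stmt_14 {V W E₀ E₁ F₀ F₁ : Type*}
    [NormedAddCommGroup V] [NormedSpace ℂ V] [NormedAddCommGroup W] [NormedSpace ℂ W]
    [NormedAddCommGroup E₀] [NormedSpace ℂ E₀] [NormedAddCommGroup E₁] [NormedSpace ℂ E₁]
    [NormedAddCommGroup F₀] [NormedSpace ℂ F₀] [NormedAddCommGroup F₁] [NormedSpace ℂ F₁]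
    (j₀ : E₀ →L[ℂ] V) (j₁ : E₁ →L[ℂ] V) (k₀ : F₀ →L[ℂ] W) (k₁ : F₁ →L[ℂ] W)
    (T : V →L[ℂ] W) (M₀ M₁ : ℝ) (hM₀ : 0 < M₀) (hM₁ : 0 < M₁)
    (hT₀ : ∀ a : E₀, ∃ a' : F₀, k₀ a' = T (j₀ a) ∧ ‖a'‖ ≤ M₀ * ‖a‖)
    (hT₁ : ∀ b : E₁, ∃ b' : F₁, k₁ b' = T (j₁ b) ∧ ‖b'‖ ≤ M₁ * ‖b‖)
    (θ : ℝ) (hθ₀ : 0 < θ) (hθ₁ : θ < 1)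
    (x : V) (r : ℝ) (hx : interpBound j₀ j₁ θ x r) :
    interpBound k₀ k₁ θ (T x) (M₀ ^ (1 - θ) * M₁ ^ θ * r) :=
  stmt_14_general j₀ j₁ k₀ k₁ T M₀ M₁ hM₀ hM₁ hT₀ hT₁ θ x r hx
end

section
/- Let Ω = (0, 1/2) × (0, 1/2) and let v(x,y) = ∫₀^y ∫_{1/2}^s dt/(t ln t) ds. Let ρ(x,y) denote the distance from (x,y) to the boundary of Ω. Then √ρ · ∂²v/∂y² ∈ L²(Ω), i.e. ∫_Ω ρ(x,y) / (y ln y)² dx dy < ∞. -/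
/-!
Since `ρ(x, y) ≤ y` (the point `(x, 0)` lies on `∂Ω`), the integrand is dominated by
`1 / (y (log y)²)`, which depends on `y` alone and is integrable near `0` because it is the
derivative of the bounded monotone function `-1 / log y`.
-/

open MeasureTheory Set

namespace Real

theorem continuousAt_inv_log_zero : ContinuousAt (fun x ↦ (log x)⁻¹) 0 := by
  -- the junk value `log 0 = 0` is exactly the limit of `(log x)⁻¹` at `0`
  rw [← continuousWithinAt_compl_self, ContinuousWithinAt, log_zero, inv_zero]
  exact tendsto_log_nhdsNE_zero.inv_tendsto_atBot

theorem integrableOn_inv_div_log_sq_Ioc {c : ℝ} (hc : c < 1) :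
    IntegrableOn (fun t ↦ t⁻¹ / log t ^ 2) (Ioc 0 c) := by
  apply intervalIntegral.integrableOn_deriv_of_nonneg (g := fun t ↦ -(log t)⁻¹)
  · intro t ht
    rcases ht.1.eq_or_lt with rfl | ht₀
    · exact continuousAt_inv_log_zero.neg.continuousWithinAt
    · have hlog : log t ≠ 0 := (log_neg ht₀ (by linarith [ht.2])).ne
      exact ((continuousAt_log ht₀.ne').inv₀ hlog).neg.continuousWithinAt
  · exact fun t ht ↦
      (hasDerivAt_inv_log (by grind : t ≠ 0) (by grind) (by grind)).neg.congr_deriv (by ring)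
  · intro t ht
    have ht₀ : 0 < t := ht.1
    positivity

end Real

theorem MeasureTheory.IntegrableOn.comp_snd_prod {α β E : Type*} [MeasurableSpace α]
    [MeasurableSpace β] [NormedAddCommGroup E] {μ : Measure α} {ν : Measure β} [SFinite μ]
    [SFinite ν] {s : Set α} {t : Set β} {g : β → E} (hg : IntegrableOn g t ν) (hs : μ s ≠ ⊤) :
    IntegrableOn (fun p : α × β ↦ g p.2) (s ×ˢ t) (μ.prod ν) := by
  have : IsFiniteMeasure (μ.restrict s) := isFiniteMeasure_restrict.2 hs
  rw [IntegrableOn, ← Measure.prod_restrict]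
  exact hg.comp_snd _

theorem Metric.infDist_frontier_prod_le {α β : Type*} [PseudoMetricSpace α] [PseudoMetricSpace β]
    {s : Set α} {t : Set β} {p : α × β} {b : β} (hp : p.1 ∈ closure s) (hb : b ∈ frontier t) :
    infDist p (frontier (s ×ˢ t)) ≤ dist p.2 b := by
  have hmem : (p.1, b) ∈ frontier (s ×ˢ t) := by
    rw [frontier_prod_eq]
    exact Or.inl ⟨hp, hb⟩
  calc infDist p (frontier (s ×ˢ t)) ≤ dist p (p.1, b) := infDist_le_dist_of_mem hmem
    _ = dist p.2 b := by simp [Prod.dist_eq]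

theorem div_mul_log_sq_le_inv_div_log_sq {r y : ℝ} (hr : r ≤ y) :
    r / (y * Real.log y) ^ 2 ≤ y⁻¹ / Real.log y ^ 2 := by
  calc r / (y * Real.log y) ^ 2 ≤ y / (y * Real.log y) ^ 2 := by gcongr
    _ = y⁻¹ / Real.log y ^ 2 := by
      rcases eq_or_ne y 0 with rfl | hy
      · simp
      · rw [mul_pow, ← div_div, sq y, div_mul_cancel_left₀ hy, div_eq_mul_inv]

/-- Let Ω = (0,1/2) × (0,1/2) and v(x,y) = ∫₀^y ∫_{1/2}^s dt/(t ln t) ds, whose only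
    nonzero second derivative is ∂²v/∂y² = 1/(y ln y).  With ρ the distance to ∂Ω,
    √ρ·∂²v/∂y² ∈ L²(Ω), i.e. ρ(x,y)/(y ln y)² is integrable on Ω. -/
theorem stmt_19 :
    MeasureTheory.IntegrableOn
      (fun p : ℝ × ℝ =>
        Metric.infDist p (frontier (Set.Ioo (0:ℝ) (1/2) ×ˢ Set.Ioo (0:ℝ) (1/2)))
          / (p.2 * Real.log p.2) ^ 2)
      (Set.Ioo (0:ℝ) (1/2) ×ˢ Set.Ioo (0:ℝ) (1/2)) volume := by
  have hρ : ∀ p ∈ Ioo (0:ℝ) (1/2) ×ˢ Ioo (0:ℝ) (1/2),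
      Metric.infDist p (frontier (Ioo (0:ℝ) (1/2) ×ˢ Ioo (0:ℝ) (1/2))) ≤ p.2 := by
    intro p hp
    have h0 : (0:ℝ) ∈ frontier (Ioo (0:ℝ) (1/2)) := by simp
    simpa [Real.dist_eq, abs_of_pos hp.2.1] using
      Metric.infDist_frontier_prod_le (subset_closure hp.1) h0
  have hmajorant : IntegrableOn (fun p : ℝ × ℝ ↦ p.2⁻¹ / Real.log p.2 ^ 2)
      (Ioo (0:ℝ) (1/2) ×ˢ Ioo (0:ℝ) (1/2)) volume :=
    ((Real.integrableOn_inv_div_log_sq_Ioc (by norm_num)).mono_set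
      Ioo_subset_Ioc_self).comp_snd_prod (by simp)
  refine hmajorant.mono'
    ((Metric.continuous_infDist_pt _).measurable.div (by fun_prop)).aestronglyMeasurable ?_
  filter_upwards [ae_restrict_mem (measurableSet_Ioo.prod measurableSet_Ioo)] with p hp
  rw [Real.norm_of_nonneg (div_nonneg Metric.infDist_nonneg (sq_nonneg _))]
  exact div_mul_log_sq_le_inv_div_log_sq (hρ p hp)
end
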